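/- In a finite acyclic action-deterministic transition system where for every state all pairwise-distinct co-enabled actions are independent, every execution from a state s to a deadlock state d uses the same multiset of actions and has the same length; i.e., the multiset of action labels along any execution from s to d is an invariant of the pair (s, d). -/

import Mathlib

/-- An action-deterministic transition system: each action has at most one
successor from each state, given by a partial step function. -/
structure TS (S A : Type) where
  step : A → S → Option S

namespace TS

variable {S A : Type}

/-- An action is enabled in a state if it has a successor. -/
def Enabled (T : TS S A) (a : A) (s : S) : Prop := (T.step a s).isSome

/-- `I` is an independence relation: for every state where two distinct
`I`-related actions are both enabled, each remains enabled after the other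
(enabledness) and the two execution orders yield the same state (commutativity). -/
def IndepRel (T : TS S A) (I : A → A → Prop) : Prop :=
  ∀ a b s, I a b → a ≠ b → T.Enabled a s → T.Enabled b s →
    ∃ sa sb, T.step a s = some sa ∧ T.step b s = some sb ∧
      T.Enabled b sa ∧ T.Enabled a sb ∧ T.step b sa = T.step a sb

/-- A deadlock state: no action is enabled. -/
def Deadlock (T : TS S A) (s : S) : Prop := ∀ a : A, ¬ T.Enabled a s

/-- `Run T l s t`: an execution fragment from `s` to `t` whose sequence of
action labels is `l` (so its length is `l.length`). -/
inductive Run (T : TS S A) : List A → S → S → Prop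
  | nil (s : S) : Run T [] s s
  | cons {a : A} {l : List A} {s s' t : S} :
      T.step a s = some s' → Run T l s' t → Run T (a :: l) s t

/-- `ARun T amp l s t`: an execution fragment in the reduced graph that keeps,
from each state `u`, only the transitions labeled by actions in `amp u`. -/
inductive ARun (T : TS S A) (amp : S → Set A) : List A → S → S → Prop
  | nil (s : S) : ARun T amp [] s s
  | cons {a : A} {l : List A} {s s' t : S} :
      a ∈ amp s → T.step a s = some s' → ARun T amp l s' t → ARun T amp (a :: l) s t

end TS

/-!
Full commutation of distinct co-enabled actions gives the diamond property. With it, any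
step `s -b→ s'` can be moved to the front of a run from `s` to a deadlock `d`: the run cannot
end before `b` fires (`b` would stay enabled), and each earlier action distinct from `b`
commutes with it. So every run from `s` to `d` is a permutation of one starting with `b`,
and induction on the run gives that any two runs from `s` to `d` are permutations of each other.
-/

namespace TS

variable {S A : Type} {T : TS S A}

def Diamond (T : TS S A) : Prop :=
  ∀ ⦃a b : A⦄ ⦃s sa sb : S⦄, a ≠ b → T.step a s = some sa → T.step b s = some sb →
    ∃ u, T.step b sa = some u ∧ T.step a sb = some u

lemma enabled_of_step_eq_some {a : A} {s s' : S} (h : T.step a s = some s') :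
    T.Enabled a s := by
  simp [Enabled, h]

lemma Deadlock.step_eq_none {s : S} (h : T.Deadlock s) (a : A) : T.step a s = none :=
  Option.not_isSome_iff_eq_none.mp (h a)

lemma IndepRel.diamond {I : A → A → Prop} (hI : T.IndepRel I)
    (hall : ∀ (a b : A) (s : S), a ≠ b → T.Enabled a s → T.Enabled b s → I a b) :
    T.Diamond := by
  intro a b s sa sb hne ha hb
  have hEa := enabled_of_step_eq_some ha
  have hEb := enabled_of_step_eq_some hb
  obtain ⟨sa', sb', ha', hb', hEb_sa, -, hcomm⟩ := hI a b s (hall a b s hne hEa hEb) hne hEa hEb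
  obtain rfl : sa' = sa := Option.some_injective _ (ha'.symm.trans ha)
  obtain rfl : sb' = sb := Option.some_injective _ (hb'.symm.trans hb)
  obtain ⟨u, hu⟩ := Option.isSome_iff_exists.mp hEb_sa
  exact ⟨u, hu, hcomm ▸ hu⟩

lemma Run.eq_nil_of_deadlock {l : List A} {s t : S} (hdead : T.Deadlock s) (h : T.Run l s t) :
    l = [] := by
  cases h with
  | nil => rfl
  | cons ha _ => simp [hdead.step_eq_none] at ha

lemma Run.exists_perm_cons_of_step (hD : T.Diamond) {d : S} (hdead : T.Deadlock d) :
    ∀ {l : List A} {s : S} {b : A} {sb : S}, T.Run l s d → T.step b s = some sb →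
      ∃ l', T.Run l' sb d ∧ l.Perm (b :: l')
  | _, _, b, _, .nil _, hb => by simp [hdead.step_eq_none] at hb
  | a :: l, s, b, sb, .cons (s' := sa) ha hrest, hb => by
    by_cases hab : a = b
    · subst hab
      obtain rfl : sa = sb := Option.some_injective _ (ha.symm.trans hb)
      exact ⟨l, hrest, .refl _⟩
    · obtain ⟨u, hbu, hau⟩ := hD hab ha hb
      obtain ⟨l', hl', hperm⟩ := exists_perm_cons_of_step hD hdead hrest hbu
      exact ⟨a :: l', .cons hau hl', (hperm.cons a).trans (.swap b a l')⟩

lemma Run.perm_of_deadlock (hD : T.Diamond) {d : S} (hdead : T.Deadlock d) :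
    ∀ {l₁ l₂ : List A} {s : S}, T.Run l₁ s d → T.Run l₂ s d → l₁.Perm l₂
  | _, _, _, .nil _, h2 => by rw [h2.eq_nil_of_deadlock hdead]
  | a :: _, _, _, .cons ha hrest, h2 => by
    obtain ⟨l₂', hl₂', hperm⟩ := exists_perm_cons_of_step hD hdead h2 ha
    exact ((perm_of_deadlock hD hdead hrest hl₂').cons a).trans hperm.symm

end TS

theorem stmt17_general {S A : Type} (T : TS S A) (I : A → A → Prop)
    (hI : T.IndepRel I)
    (hallind : ∀ (a b : A) (s : S), a ≠ b → T.Enabled a s → T.Enabled b s → I a b)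
    (s d : S) (hdead : T.Deadlock d)
    (l₁ l₂ : List A)
    (h1 : T.Run l₁ s d) (h2 : T.Run l₂ s d) :
    (l₁ : Multiset A) = (l₂ : Multiset A) ∧ l₁.length = l₂.length := by
  have hperm := TS.Run.perm_of_deadlock (hI.diamond hallind) hdead h1 h2
  exact ⟨Multiset.coe_eq_coe.mpr hperm, hperm.length_eq⟩

/-- in a finite acyclic action-deterministic transition system in
which any two distinct co-enabled actions are independent, any two executions
from a state `s` to a deadlock state `d` use the same multiset of actions (and
hence have the same length). -/
theorem stmt17 {S A : Type} [Fintype S] (T : TS S A) (I : A → A → Prop)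
    (hI : T.IndepRel I)
    (hallind : ∀ (a b : A) (s : S), a ≠ b → T.Enabled a s → T.Enabled b s → I a b)
    (hacyc : ∀ (s : S) (l : List A), l ≠ [] → T.Run l s s → False)
    (s d : S) (hdead : T.Deadlock d)
    (l₁ l₂ : List A)
    (h1 : T.Run l₁ s d) (h2 : T.Run l₂ s d) :
    (l₁ : Multiset A) = (l₂ : Multiset A) ∧ l₁.length = l₂.length :=
  stmt17_general T I hI hallind s d hdead l₁ l₂ h1 h2
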